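/- Let B be a real normed vector space, T > 0, and C ≥ 0. Let a, b : [0,T] → B be continuous functions such that ‖a(t)‖² ≤ C · ∫₀ᵗ ‖b(τ)‖² dτ for every t ∈ [0,T]. Then for every γ > 0 one has sup over t ∈ [0,T] of e^(−γt)·‖a(t)‖ ≤ √(C/(2γ)) · (sup over t ∈ [0,T] of e^(−γt)·‖b(t)‖). In particular, if γ > C/2 the factor √(C/(2γ)) is strictly less than 1. -/
import Mathlib


open Real

/-- The core contraction estimate: if continuous `a, b : [0,T] → B` satisfy
`‖a(t)‖² ≤ C·∫₀ᵗ ‖b(τ)‖² dτ` for all `t ∈ [0,T]`, then for every `γ > 0`,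
`sup_{t∈[0,T]} e^{−γt}‖a(t)‖ ≤ √(C/(2γ))·sup_{t∈[0,T]} e^{−γt}‖b(t)‖`; and
`√(C/(2γ)) < 1` whenever `γ > C/2`. -/
theorem weighted_contraction_estimate
    {B : Type*} [NormedAddCommGroup B] [NormedSpace ℝ B]
    (T C : ℝ) (hT : 0 < T) (hC : 0 ≤ C)
    (a b : ℝ → B)
    (ha : ContinuousOn a (Set.Icc 0 T)) (hb : ContinuousOn b (Set.Icc 0 T))
    (hab : ∀ t ∈ Set.Icc (0 : ℝ) T, ‖a t‖ ^ 2 ≤ C * ∫ τ in (0 : ℝ)..t, ‖b τ‖ ^ 2) :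
    ∀ γ : ℝ, 0 < γ →
      ((⨆ t : Set.Icc (0 : ℝ) T, exp (-γ * (t : ℝ)) * ‖a t‖) ≤
          Real.sqrt (C / (2 * γ)) * ⨆ t : Set.Icc (0 : ℝ) T, exp (-γ * (t : ℝ)) * ‖b t‖) ∧
        (C / 2 < γ → Real.sqrt (C / (2 * γ)) < 1) := by
  intro γ hγ
  have h2γ : (0 : ℝ) < 2 * γ := by linarith
  have hne : Nonempty (Set.Icc (0:ℝ) T) := ⟨⟨0, le_refl 0, hT.le⟩⟩
  set M : ℝ := ⨆ t : Set.Icc (0:ℝ) T, exp (-γ * (t:ℝ)) * ‖b t‖ with hMdef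
  have hcontb : Continuous (fun t : Set.Icc (0:ℝ) T => exp (-γ * (t:ℝ)) * ‖b t‖) := by
    exact (Real.continuous_exp.comp (continuous_const.mul continuous_subtype_val)).mul
      (continuous_norm.comp hb.restrict)
  have hbdd : BddAbove (Set.range fun t : Set.Icc (0:ℝ) T => exp (-γ * (t:ℝ)) * ‖b t‖) :=
    (isCompact_range hcontb).bddAbove
  have hMle : ∀ t ∈ Set.Icc (0:ℝ) T, exp (-γ * t) * ‖b t‖ ≤ M := fun t ht =>
    le_ciSup hbdd ⟨t, ht⟩
  have hM0 : 0 ≤ M :=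
    le_trans (by positivity) (hMle 0 ⟨le_refl 0, hT.le⟩)
  -- pointwise bound on b
  have hbpt : ∀ τ ∈ Set.Icc (0:ℝ) T, ‖b τ‖ ^ 2 ≤ M ^ 2 * exp (2 * γ * τ) := by
    intro τ hτ
    have h1 : ‖b τ‖ ≤ exp (γ * τ) * M := by
      have := hMle τ hτ
      have hpos : 0 < exp (-γ * τ) := exp_pos _
      calc ‖b τ‖ = exp (γ * τ) * (exp (-γ * τ) * ‖b τ‖) := by
            rw [← mul_assoc, ← Real.exp_add]
            ring_nf
            simp
        _ ≤ exp (γ * τ) * M := by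
            have := hMle τ hτ
            nlinarith [exp_pos (γ * τ)]
    have h2 : ‖b τ‖ ^ 2 ≤ (exp (γ * τ) * M) ^ 2 := by
      have h0 : 0 ≤ ‖b τ‖ := norm_nonneg _
      nlinarith
    calc ‖b τ‖ ^ 2 ≤ (exp (γ * τ) * M) ^ 2 := h2
      _ = M ^ 2 * exp (2 * γ * τ) := by
          rw [mul_pow, ← Real.exp_nat_mul]
          ring_nf
  -- integral bound
  have hint : ∀ t ∈ Set.Icc (0:ℝ) T,
      (∫ τ in (0:ℝ)..t, ‖b τ‖ ^ 2) ≤ M ^ 2 * exp (2 * γ * t) / (2 * γ) := by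
    intro t ht
    have hsub : Set.Icc (0:ℝ) t ⊆ Set.Icc 0 T := Set.Icc_subset_Icc le_rfl ht.2
    have hib : IntervalIntegrable (fun τ => ‖b τ‖ ^ 2) MeasureTheory.volume 0 t := by
      apply ContinuousOn.intervalIntegrable
      rw [Set.uIcc_of_le ht.1]
      exact ((continuous_norm.comp_continuousOn (hb.mono hsub)).pow 2)
    have hie : IntervalIntegrable (fun τ => M ^ 2 * exp (2 * γ * τ))
        MeasureTheory.volume 0 t :=
      (Continuous.intervalIntegrable (by continuity) 0 t)
    have hmono : (∫ τ in (0:ℝ)..t, ‖b τ‖ ^ 2) ≤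
        ∫ τ in (0:ℝ)..t, M ^ 2 * exp (2 * γ * τ) := by
      apply intervalIntegral.integral_mono_on ht.1 hib hie
      intro x hx
      exact hbpt x (hsub hx)
    have hexp : (∫ τ in (0:ℝ)..t, exp (2 * γ * τ)) =
        (exp (2 * γ * t) - 1) / (2 * γ) := by
      rw [intervalIntegral.integral_comp_mul_left (f := fun x => exp x) (c := 2 * γ)
        (ne_of_gt h2γ)]
      simp [integral_exp, smul_eq_mul]
      ring
    have hval : (∫ τ in (0:ℝ)..t, M ^ 2 * exp (2 * γ * τ)) =
        M ^ 2 * ((exp (2 * γ * t) - 1) / (2 * γ)) := by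
      rw [intervalIntegral.integral_const_mul, hexp]
    have hle2 : M ^ 2 * ((exp (2 * γ * t) - 1) / (2 * γ)) ≤
        M ^ 2 * exp (2 * γ * t) / (2 * γ) := by
      rw [mul_div_assoc]
      gcongr
      linarith [exp_pos (2 * γ * t)]
    calc (∫ τ in (0:ℝ)..t, ‖b τ‖ ^ 2) ≤ _ := hmono
      _ = M ^ 2 * ((exp (2 * γ * t) - 1) / (2 * γ)) := hval
      _ ≤ M ^ 2 * exp (2 * γ * t) / (2 * γ) := hle2
  constructor
  · apply ciSup_le
    intro ⟨t, ht⟩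
    have key : (exp (-γ * t) * ‖a t‖) ^ 2 ≤ (Real.sqrt (C / (2 * γ)) * M) ^ 2 := by
      have h1 : ‖a t‖ ^ 2 ≤ C * (M ^ 2 * exp (2 * γ * t) / (2 * γ)) :=
        le_trans (hab t ht) (by
          have := hint t ht
          nlinarith)
      have hsq : Real.sqrt (C / (2 * γ)) ^ 2 = C / (2 * γ) :=
        Real.sq_sqrt (by positivity)
      have hexp2 : exp (-γ * t) ^ 2 = exp (-(2 * γ * t)) := by
        rw [← Real.exp_nat_mul]
        ring_nf
      calc (exp (-γ * t) * ‖a t‖) ^ 2 = exp (-γ * t) ^ 2 * ‖a t‖ ^ 2 := by ring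
        _ ≤ exp (-γ * t) ^ 2 * (C * (M ^ 2 * exp (2 * γ * t) / (2 * γ))) := by
            have : (0:ℝ) ≤ exp (-γ * t) ^ 2 := sq_nonneg _
            nlinarith
        _ = exp (-(2 * γ * t)) * exp (2 * γ * t) * (C / (2 * γ) * M ^ 2) := by
            rw [hexp2]; ring
        _ = C / (2 * γ) * M ^ 2 := by
            rw [← Real.exp_add]; simp
        _ = (Real.sqrt (C / (2 * γ)) * M) ^ 2 := by
            rw [mul_pow, hsq]
    have h0l : 0 ≤ exp (-γ * t) * ‖a t‖ := by positivity
    have h0r : 0 ≤ Real.sqrt (C / (2 * γ)) * M := by positivity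
    nlinarith
  · intro hCγ
    have : C / (2 * γ) < 1 := by
      rw [div_lt_one h2γ]; linarith
    calc Real.sqrt (C / (2 * γ)) < Real.sqrt 1 :=
          (Real.sqrt_lt_sqrt (by positivity) this)
      _ = 1 := Real.sqrt_one
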